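/- arXiv:2409.14114 — 3 statements merged into one kernel-verified Lean document; each statement's English description precedes it below -/
import Mathlib

section
/- Uniform closeness of geodesic rays with the same endpoint excludes escape of small horospheres (key Gromov-hyperbolic computation): let X be a metric space, β, γ, σ : [0,∞) → X geodesic rays with γ(0) = β(0) = o and σ(0) = β(T) for some T ≥ 0, and suppose d(σ(t), β(t+T)) ≤ 2δ and d(γ(t+T), β(t+T)) ≤ 2δ for all t ≥ 0 (so d(σ(t), γ(t+T)) ≤ 4δ). Let (w_n) be a sequence in X and suppose for each n there are geodesic segments from o to w_n converging locally uniformly to γ, and from β(T) to w_n converging locally uniformly to σ. Then, writing z_T = β(T), for every t₀ ≥ 0: limsup_n (d(z_T, w_n) − d(o, w_n)) ≤ d(z_T, σ(t₀)) − d(o, σ(t₀)) + 2 d(σ(t₀), γ(t₀+T)) ≤ t₀ − (t₀ + T − 2δ) + 8δ = −T + 10δ. -/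
/-!
Along the geodesic `γₙ` from `o` to `wₙ` we have `d(o, wₙ) = T + d(γₙ(T), wₙ)`, so the triangle
inequality through `γₙ(T)` gives `d(β(T), wₙ) - d(o, wₙ) ≤ d(β(T), γₙ(T)) - T`. As `n → ∞` the
right-hand side tends to `d(β(T), γ(T)) - T ≤ 2δ - T`.
-/

open Filter Topology

section Geodesic

variable {X : Type*} [PseudoMetricSpace X]

lemma dist_eq_sub_of_geodesic_segment {c : ℝ → X} {L t : ℝ}
    (hc : ∀ s ∈ Set.Icc 0 L, ∀ u ∈ Set.Icc 0 L, dist (c s) (c u) = |s - u|)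
    (ht : t ∈ Set.Icc 0 L) : dist (c t) (c L) = L - t := by
  rw [hc t ht L ⟨ht.1.trans ht.2, le_rfl⟩, abs_of_nonpos (sub_nonpos.mpr ht.2), neg_sub]

lemma dist_sub_dist_le_of_geodesic_segment (z : X) {o w : X} {c : ℝ → X} {t : ℝ}
    (hend : c (dist o w) = w)
    (hc : ∀ s ∈ Set.Icc 0 (dist o w), ∀ u ∈ Set.Icc 0 (dist o w), dist (c s) (c u) = |s - u|)
    (ht : t ∈ Set.Icc 0 (dist o w)) : dist z w - dist o w ≤ dist z (c t) - t := by
  have hrest : dist (c t) w = dist o w - t := by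
    simpa only [hend] using dist_eq_sub_of_geodesic_segment hc ht
  linarith [dist_triangle z (c t) w]

lemma limsup_dist_sub_dist_le_of_tendsto_geodesic (z o : X) {w : ℕ → X} {c : ℕ → ℝ → X}
    {p : X} {t : ℝ} (ht : 0 ≤ t) (hw : Tendsto (fun n => dist o (w n)) atTop atTop)
    (hend : ∀ n, c n (dist o (w n)) = w n)
    (hc : ∀ n, ∀ s ∈ Set.Icc 0 (dist o (w n)), ∀ u ∈ Set.Icc 0 (dist o (w n)),
      dist (c n s) (c n u) = |s - u|)
    (hconv : Tendsto (fun n => c n t) atTop (𝓝 p)) :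
    limsup (fun n => dist z (w n) - dist o (w n)) atTop ≤ dist z p - t := by
  have hlim : Tendsto (fun n => dist z (c n t) - t) atTop (𝓝 (dist z p - t)) :=
    (tendsto_const_nhds.dist hconv).sub_const t
  have hbdd_below : IsCoboundedUnder (· ≤ ·) atTop (fun n => dist z (w n) - dist o (w n)) :=
    isCoboundedUnder_le_of_le atTop (x := -dist z o) fun n => by
      linarith [dist_triangle o z (w n), dist_comm o z]
  have hle : ∀ᶠ n in atTop, dist z (w n) - dist o (w n) ≤ dist z (c n t) - t :=
    (hw.eventually_ge_atTop t).mono fun n hn =>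
      dist_sub_dist_le_of_geodesic_segment z (hend n) (hc n) ⟨ht, hn⟩
  calc limsup (fun n => dist z (w n) - dist o (w n)) atTop
      ≤ limsup (fun n => dist z (c n t) - t) atTop :=
        limsup_le_limsup hle hbdd_below hlim.isBoundedUnder_le
    _ = dist z p - t := hlim.limsup_eq

end Geodesic

theorem stmt13_general {X : Type*} [MetricSpace X] (δ T : ℝ) (hδ : 0 ≤ δ) (hT : 0 ≤ T)
    (β γ : ℝ → X) (o : X)
    (hγβ : ∀ t : ℝ, 0 ≤ t → dist (γ t) (β t) ≤ 2 * δ)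
    (w : ℕ → X)
    (hwo : Tendsto (fun n => dist o (w n)) atTop atTop)
    (γseg : ℕ → ℝ → X)
    (hγseg : ∀ n, γseg n 0 = o ∧ γseg n (dist o (w n)) = w n ∧
      ∀ s t : ℝ, s ∈ Set.Icc 0 (dist o (w n)) → t ∈ Set.Icc 0 (dist o (w n)) →
        dist (γseg n s) (γseg n t) = |s - t|)
    (hγconv : TendstoLocallyUniformlyOn γseg γ atTop (Set.Ici 0)) :
    Filter.limsup (fun n => dist (β T) (w n) - dist o (w n)) atTop ≤ -T + 10 * δ := by
  have hlimsup := limsup_dist_sub_dist_le_of_tendsto_geodesic (β T) o hT hwo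
    (fun n => (hγseg n).2.1) (fun n s hs u hu => (hγseg n).2.2 s u hs hu)
    (hγconv.tendsto_at (Set.mem_Ici.mpr hT))
  have hclose : dist (β T) (γ T) ≤ 2 * δ := dist_comm (γ T) (β T) ▸ hγβ T hT
  linarith

/-- Key Gromov-hyperbolic computation: let `β, γ, σ : [0,∞) → X` be
geodesic rays with `γ(0) = β(0) = o` and `σ(0) = β(T)`, satisfying
`d(σ(t), β(t+T)) ≤ 2δ` and `d(γ(t), β(t)) ≤ 2δ` for all `t ≥ 0`. Suppose `(w_n)` is a
sequence with `d(o,w_n) → ∞` and `d(β(T),w_n) → ∞`, joined to `o` (resp. to `β(T)`) by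
geodesic segments `γ_n` (resp. `σ_n`) which converge locally uniformly on `[0,∞)` to `γ`
(resp. `σ`). Then `limsup_n (d(β(T), w_n) - d(o, w_n)) ≤ -T + 10δ`. -/
theorem stmt13 {X : Type*} [MetricSpace X] (δ T : ℝ) (hδ : 0 ≤ δ) (hT : 0 ≤ T)
    (β γ σ : ℝ → X) (o : X) (hβ0 : β 0 = o) (hγ0 : γ 0 = o) (hσ0 : σ 0 = β T)
    (hβray : ∀ s t : ℝ, 0 ≤ s → 0 ≤ t → dist (β s) (β t) = |s - t|)
    (hγray : ∀ s t : ℝ, 0 ≤ s → 0 ≤ t → dist (γ s) (γ t) = |s - t|)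
    (hσray : ∀ s t : ℝ, 0 ≤ s → 0 ≤ t → dist (σ s) (σ t) = |s - t|)
    (hσβ : ∀ t : ℝ, 0 ≤ t → dist (σ t) (β (t + T)) ≤ 2 * δ)
    (hγβ : ∀ t : ℝ, 0 ≤ t → dist (γ t) (β t) ≤ 2 * δ)
    (w : ℕ → X)
    (hwo : Tendsto (fun n => dist o (w n)) atTop atTop)
    (hwz : Tendsto (fun n => dist (β T) (w n)) atTop atTop)
    (γseg σseg : ℕ → ℝ → X)
    (hγseg : ∀ n, γseg n 0 = o ∧ γseg n (dist o (w n)) = w n ∧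
      ∀ s t : ℝ, s ∈ Set.Icc 0 (dist o (w n)) → t ∈ Set.Icc 0 (dist o (w n)) →
        dist (γseg n s) (γseg n t) = |s - t|)
    (hσseg : ∀ n, σseg n 0 = β T ∧ σseg n (dist (β T) (w n)) = w n ∧
      ∀ s t : ℝ, s ∈ Set.Icc 0 (dist (β T) (w n)) → t ∈ Set.Icc 0 (dist (β T) (w n)) →
        dist (σseg n s) (σseg n t) = |s - t|)
    (hγconv : TendstoLocallyUniformlyOn γseg γ atTop (Set.Ici 0))
    (hσconv : TendstoLocallyUniformlyOn σseg σ atTop (Set.Ici 0)) :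
    Filter.limsup (fun n => dist (β T) (w n) - dist o (w n)) atTop ≤ -T + 10 * δ :=
  stmt13_general δ T hδ hT β γ o hγβ w hwo γseg hγseg hγconv
end

section
/- Dini-smooth boundary point estimate implies membership of nearby normal points in small horospheres: let Ω be a bounded domain in ℂ^d with distance k (e.g. Kobayashi), o ∈ Ω, x ∈ ∂Ω, δ(·) the Euclidean boundary-distance function. Assume (i) there is C ∈ ℝ with k(o,w) ≥ C + (1/2) log(1/δ(w)) for all w ∈ Ω, and (ii) there are ε > 0, c > 0 with k(z,w) ≤ log(1 + c‖z−w‖/√(δ(z)δ(w))) for all z,w ∈ B(x,ε) ∩ Ω. Then for every z ∈ B(x,ε) ∩ Ω, limsup_{w→x} (k(z,w) − k(o,w)) ≤ (1/2) log‖z−x‖ + (1/2) log(‖z−x‖/δ(z)) + (log c − C). In particular, if there is a sequence z_j → x with ‖z_j − x‖/δ(z_j) bounded, then for every R > 0 there exist points z arbitrarily close to x with limsup_{w→x}(k(z,w) − k(o,w)) < (1/2) log R, i.e. x lies in the closure of the small horosphere H^s_o(x,R). -/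
/-!
Combining the two bounds gives, for `w` near `x`,
`k(z,w) - k(o,w) ≤ log (√(δ(z) δ(w)) + c‖z - w‖) - ½ log δ(z) - C`.
The right-hand side is continuous at `x`, where `δ` vanishes, so the limsup is at most its value
`log (c‖z - x‖) - ½ log δ(z) - C` there. Along a sequence with `‖z_j - x‖ / δ(z_j) ≤ K` this value
is at most `½ log ‖z_j - x‖ + O(1)`, which tends to `-∞`.
-/

open Filter Topology

theorem Metric.infDist_frontier_pos {X : Type*} [PseudoMetricSpace X] {s : Set X}
    (hs : IsOpen s) (hne : (frontier s).Nonempty) {z : X} (hz : z ∈ s) :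
    0 < Metric.infDist z (frontier s) :=
  (isClosed_frontier.notMem_iff_infDist_pos hne).mp fun h => (hs.frontier_eq ▸ h).2 hz

theorem Real.log_one_add_div_sqrt_mul {a b r : ℝ} (ha : 0 < a) (hb : 0 < b) (hr : 0 ≤ r) :
    Real.log (1 + r / √(a * b)) = Real.log (√(a * b) + r) - Real.log a / 2 - Real.log b / 2 := by
  have hsqrt : 0 < √(a * b) := Real.sqrt_pos.mpr (mul_pos ha hb)
  rw [show 1 + r / √(a * b) = (√(a * b) + r) / √(a * b) by field_simp,
    Real.log_div (by positivity) hsqrt.ne', Real.log_sqrt (mul_pos ha hb).le,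
    Real.log_mul ha.ne' hb.ne']
  ring

theorem Filter.limsup_le_of_eventuallyLE_of_tendsto {α β : Type*}
    [ConditionallyCompleteLinearOrder β] [TopologicalSpace β] [OrderTopology β]
    {l : Filter α} [l.NeBot] {f g : α → β} {L : β}
    (hf : IsCoboundedUnder (· ≤ ·) l f) (hfg : f ≤ᶠ[l] g) (hg : Tendsto g l (𝓝 L)) :
    limsup f l ≤ L :=
  (limsup_le_limsup hfg hf hg.isBoundedUnder_le).trans_eq hg.limsup_eq

section Horofunction

variable {E : Type*} [NormedAddCommGroup E] {Ω : Set E} {δ : E → ℝ} {x : E}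

theorem limsup_sub_le_of_mercer_of_nikolovAndreev {k : E → E → ℝ} {o z : E} {C c : ℝ}
    (hx : x ∈ closure Ω) (hδx : δ x = 0) (hδcont : ContinuousWithinAt δ Ω x)
    (hδpos : ∀ w ∈ Ω, 0 < δ w) (hz : z ∈ Ω) (hc : 0 < c)
    (htri : ∀ w, k o w ≤ k o z + k z w)
    (hMercer : ∀ w ∈ Ω, C + (1/2) * Real.log (1 / δ w) ≤ k o w)
    (hNA : ∀ᶠ w in 𝓝[Ω] x, k z w ≤ Real.log (1 + c * ‖z - w‖ / Real.sqrt (δ z * δ w))) :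
    limsup (fun w => k z w - k o w) (𝓝[Ω] x) ≤
      (1/2) * Real.log ‖z - x‖ + (1/2) * Real.log (‖z - x‖ / δ z) + (Real.log c - C) := by
  have : (𝓝[Ω] x).NeBot := mem_closure_iff_nhdsWithin_neBot.mp hx
  have hδz : 0 < δ z := hδpos z hz
  have hzx : 0 < ‖z - x‖ := norm_sub_pos_iff.mpr fun h => hδz.ne' (h ▸ hδx)
  set g : E → ℝ := fun w => Real.log (√(δ z * δ w) + c * ‖z - w‖) - Real.log (δ z) / 2 - C
  have hgx : g x = (1/2) * Real.log ‖z - x‖ + (1/2) * Real.log (‖z - x‖ / δ z)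
      + (Real.log c - C) := by
    simp only [g, hδx, mul_zero, Real.sqrt_zero, zero_add]
    rw [Real.log_mul hc.ne' hzx.ne', Real.log_div hzx.ne' hδz.ne']
    ring
  have hg : Tendsto g (𝓝[Ω] x) (𝓝 (g x)) := by
    have harg : ContinuousWithinAt (fun w => √(δ z * δ w) + c * ‖z - w‖) Ω x :=
      (continuousWithinAt_const.mul hδcont).sqrt.add
        (continuousWithinAt_const.mul (continuousWithinAt_const.sub continuousWithinAt_id).norm)
    have hne : √(δ z * δ x) + c * ‖z - x‖ ≠ 0 := by
      rw [hδx, mul_zero, Real.sqrt_zero, zero_add]; positivity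
    exact ((harg.log hne).sub continuousWithinAt_const).sub continuousWithinAt_const
  have hle : (fun w => k z w - k o w) ≤ᶠ[𝓝[Ω] x] g := by
    filter_upwards [self_mem_nhdsWithin, hNA] with w hw hkzw
    have hkow := hMercer w hw
    rw [Real.log_one_add_div_sqrt_mul hδz (hδpos w hw) (by positivity)] at hkzw
    rw [one_div (δ w), Real.log_inv] at hkow
    simp only [g]
    linarith
  refine limsup_le_of_eventuallyLE_of_tendsto ?_ hle (hgx ▸ hg)
  exact isCoboundedUnder_le_of_le _ (x := -k o z) fun w => by linarith [htri w]

theorem exists_mem_norm_sub_lt_and_lt_of_le_log {F : E → ℝ} {ε A K : ℝ} {zs : ℕ → E}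
    (hε : 0 < ε) (hxΩ : x ∉ Ω) (hδpos : ∀ z ∈ Ω, 0 < δ z)
    (hF : ∀ z ∈ Metric.ball x ε ∩ Ω,
      F z ≤ (1/2) * Real.log ‖z - x‖ + (1/2) * Real.log (‖z - x‖ / δ z) + A)
    (hzsΩ : ∀ j, zs j ∈ Ω) (hzs : Tendsto zs atTop (𝓝 x))
    (hK : ∀ j, ‖zs j - x‖ / δ (zs j) ≤ K) (M : ℝ) {η : ℝ} (hη : 0 < η) :
    ∃ z ∈ Ω, ‖z - x‖ < η ∧ F z < M := by
  have hpos : ∀ j, 0 < ‖zs j - x‖ := fun j => norm_sub_pos_iff.mpr fun h => hxΩ (h ▸ hzsΩ j)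
  have hdist : Tendsto (fun j => ‖zs j - x‖) atTop (𝓝 0) :=
    tendsto_iff_norm_sub_tendsto_zero.mp hzs
  have hlog : Tendsto (fun j => Real.log ‖zs j - x‖) atTop atBot :=
    Real.tendsto_log_nhdsGT_zero.comp
      (tendsto_nhdsWithin_iff.mpr ⟨hdist, Eventually.of_forall hpos⟩)
  obtain ⟨j, hjlog, hjnear⟩ :=
    ((hlog.eventually (eventually_lt_atBot (2 * (M - A) - Real.log K))).and
      (hdist.eventually_lt_const (lt_min hε hη))).exists
  have hball : zs j ∈ Metric.ball x ε ∩ Ω :=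
    ⟨by rw [Metric.mem_ball, dist_eq_norm]; exact hjnear.trans_le (min_le_left _ _), hzsΩ j⟩
  have hratio : Real.log (‖zs j - x‖ / δ (zs j)) ≤ Real.log K :=
    Real.log_le_log (div_pos (hpos j) (hδpos _ (hzsΩ j))) (hK j)
  refine ⟨zs j, hzsΩ j, hjnear.trans_le (min_le_right _ _), ?_⟩
  linarith [hF _ hball]

end Horofunction

theorem stmt15_general {E : Type*} [NormedAddCommGroup E]
    (Ω : Set E) (hΩopen : IsOpen Ω)
    (k : E → E → ℝ)
    (hktri : ∀ a b c, k a c ≤ k a b + k b c)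
    (δ : E → ℝ) (hδ : ∀ z, δ z = Metric.infDist z (frontier Ω))
    (o : E) (x : E) (hx : x ∈ frontier Ω)
    (C : ℝ) (hMercer : ∀ w ∈ Ω, C + (1/2) * Real.log (1 / δ w) ≤ k o w)
    (ε c : ℝ) (hε : 0 < ε) (hc : 0 < c)
    (hNA : ∀ z ∈ Metric.ball x ε ∩ Ω, ∀ w ∈ Metric.ball x ε ∩ Ω,
      k z w ≤ Real.log (1 + c * ‖z - w‖ / Real.sqrt (δ z * δ w))) :
    (∀ z ∈ Metric.ball x ε ∩ Ω,
      Filter.limsup (fun w => k z w - k o w) (𝓝[Ω] x) ≤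
        (1/2) * Real.log ‖z - x‖ + (1/2) * Real.log (‖z - x‖ / δ z) + (Real.log c - C)) ∧
    ((∃ zs : ℕ → E, (∀ j, zs j ∈ Ω) ∧ Tendsto zs atTop (𝓝 x) ∧
        ∃ K : ℝ, ∀ j, ‖zs j - x‖ / δ (zs j) ≤ K) →
      ∀ R : ℝ, 0 < R → ∀ η : ℝ, 0 < η → ∃ z ∈ Ω, ‖z - x‖ < η ∧
        Filter.limsup (fun w => k z w - k o w) (𝓝[Ω] x) < (1/2) * Real.log R) := by
  obtain rfl : δ = (Metric.infDist · (frontier Ω)) := funext hδ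
  have hδpos : ∀ w ∈ Ω, 0 < Metric.infDist w (frontier Ω) :=
    fun w => Metric.infDist_frontier_pos hΩopen ⟨x, hx⟩
  have hδx : Metric.infDist x (frontier Ω) = 0 := Metric.infDist_zero_of_mem hx
  have hxΩ : x ∉ Ω := fun h => (hδpos x h).ne' hδx
  have hbound : ∀ z ∈ Metric.ball x ε ∩ Ω, _ := fun z hz =>
    limsup_sub_le_of_mercer_of_nikolovAndreev (frontier_subset_closure hx) hδx
      (Metric.continuous_infDist_pt _).continuousWithinAt hδpos hz.2 hc (fun w => hktri o z w)
      hMercer (by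
        filter_upwards [self_mem_nhdsWithin, nhdsWithin_le_nhds (Metric.ball_mem_nhds x hε)]
          with w hwΩ hw using hNA z hz w ⟨hw, hwΩ⟩)
  refine ⟨hbound, ?_⟩
  rintro ⟨zs, hzsΩ, hzs, K, hK⟩ R - η hη
  exact exists_mem_norm_sub_lt_and_lt_of_le_log hε hxΩ hδpos hbound hzsΩ hzs hK _ hη

/-- Dini-smooth boundary point estimate: let `Ω` be a bounded (open) domain
in a normed space, `k` a distance on `Ω`, `δ(z) = dist(z, ∂Ω)`, `o ∈ Ω`, `x ∈ ∂Ω`.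
Assume the Mercer lower bound `k(o,w) ≥ C + (1/2) log(1/δ(w))` on `Ω` and the
Nikolov–Andreev upper bound `k(z,w) ≤ log(1 + c‖z-w‖/√(δ(z)δ(w)))` on `B(x,ε) ∩ Ω`. Then
for every `z ∈ B(x,ε) ∩ Ω`,
`limsup_{w→x, w∈Ω} (k(z,w) - k(o,w)) ≤ (1/2) log‖z-x‖ + (1/2) log(‖z-x‖/δ(z)) + (log c - C)`;
and if some sequence `z_j ∈ Ω` tends to `x` with `‖z_j - x‖/δ(z_j)` bounded, then for every
`R > 0` there are points of the small horosphere `H^s_o(x,R)` arbitrarily close to `x`. -/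
theorem stmt15 {E : Type*} [NormedAddCommGroup E] [NormedSpace ℝ E]
    (Ω : Set E) (hΩopen : IsOpen Ω) (hΩbdd : Bornology.IsBounded Ω)
    (k : E → E → ℝ)
    (hksym : ∀ a b, k a b = k b a) (hktri : ∀ a b c, k a c ≤ k a b + k b c)
    (δ : E → ℝ) (hδ : ∀ z, δ z = Metric.infDist z (frontier Ω))
    (o : E) (ho : o ∈ Ω) (x : E) (hx : x ∈ frontier Ω)
    (C : ℝ) (hMercer : ∀ w ∈ Ω, C + (1/2) * Real.log (1 / δ w) ≤ k o w)
    (ε c : ℝ) (hε : 0 < ε) (hc : 0 < c)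
    (hNA : ∀ z ∈ Metric.ball x ε ∩ Ω, ∀ w ∈ Metric.ball x ε ∩ Ω,
      k z w ≤ Real.log (1 + c * ‖z - w‖ / Real.sqrt (δ z * δ w))) :
    (∀ z ∈ Metric.ball x ε ∩ Ω,
      Filter.limsup (fun w => k z w - k o w) (𝓝[Ω] x) ≤
        (1/2) * Real.log ‖z - x‖ + (1/2) * Real.log (‖z - x‖ / δ z) + (Real.log c - C)) ∧
    ((∃ zs : ℕ → E, (∀ j, zs j ∈ Ω) ∧ Tendsto zs atTop (𝓝 x) ∧
        ∃ K : ℝ, ∀ j, ‖zs j - x‖ / δ (zs j) ≤ K) →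
      ∀ R : ℝ, 0 < R → ∀ η : ℝ, 0 < η → ∃ z ∈ Ω, ‖z - x‖ < η ∧
        Filter.limsup (fun w => k z w - k o w) (𝓝[Ω] x) < (1/2) * Real.log R) :=
  stmt15_general Ω hΩopen k hktri δ hδ o x hx C hMercer ε c hε hc hNA
end

section
/- Visibility via Gromov products excludes other boundary points from closures of big horospheres (abstract version): let X be a metric space, o ∈ X, and F, G two nontrivial filters on X (representing approach to boundary points x and y). Suppose (visibility) there is M < ∞ with limsup over F×G of ⟨z|w⟩_o ≤ M, meaning: there are sets A ∈ F, B ∈ G with ⟨z|w⟩_o ≤ M for all z ∈ A, w ∈ B. Suppose (y_n) is a sequence with y_n eventually in every set of F (i.e. y_n → y along F) and d(o,y_n) → ∞. Then for every R > 0, y_n ∉ H^b_G(R) := {z : liminf_G (d(z,w) − d(o,w)) < (1/2) log R} for all large n. -/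
open Filter

/-!
Since `d(z,w) - d(o,w) = d(o,z) - 2⟨z|w⟩_o`, a uniform bound `⟨z|w⟩_o ≤ M` for `z` near the
boundary point of `F` and `w` near that of `G` gives `liminf_G (d(y_n,w) - d(o,w)) ≥ d(o,y_n) - 2M`,
which tends to infinity; so eventually `y_n` lies outside every big horosphere centred at `G`.
-/

section GromovProduct

variable {X : Type*} [PseudoMetricSpace X]

/-- The Gromov product `⟨z|w⟩_o`. -/
noncomputable def gromovProduct (o z w : X) : ℝ :=
  (dist o z + dist o w - dist z w) / 2

lemma dist_sub_dist_eq_sub_two_mul_gromovProduct (o z w : X) :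
    dist z w - dist o w = dist o z - 2 * gromovProduct o z w := by
  unfold gromovProduct
  ring

lemma isBoundedUnder_le_dist_sub_dist (o z : X) (G : Filter X) :
    IsBoundedUnder (· ≤ ·) G (fun w => dist z w - dist o w) :=
  isBoundedUnder_of ⟨dist o z, fun w => by linarith [dist_triangle_left z w o]⟩

lemma sub_two_mul_le_liminf_dist_sub_dist {G : Filter X} [G.NeBot] {o z : X} {M : ℝ}
    (h : ∀ᶠ w in G, gromovProduct o z w ≤ M) :
    dist o z - 2 * M ≤ liminf (fun w => dist z w - dist o w) G := by
  refine le_liminf_of_le (isBoundedUnder_le_dist_sub_dist o z G).isCoboundedUnder_ge ?_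
  filter_upwards [h] with w hw
  rw [dist_sub_dist_eq_sub_two_mul_gromovProduct]
  linarith

theorem tendsto_liminf_dist_sub_dist_atTop {o : X} {F G : Filter X} [G.NeBot] {M : ℝ}
    (hvis : ∃ A ∈ F, ∃ B ∈ G, ∀ z ∈ A, ∀ w ∈ B, gromovProduct o z w ≤ M)
    {y : ℕ → X} (hyF : Tendsto y atTop F)
    (hyd : Tendsto (fun n => dist o (y n)) atTop atTop) :
    Tendsto (fun n => liminf (fun w => dist (y n) w - dist o w) G) atTop atTop := by
  obtain ⟨A, hA, B, hB, hAB⟩ := hvis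
  refine tendsto_atTop_mono' atTop ?_ (tendsto_atTop_add_const_right _ (-(2 * M)) hyd)
  filter_upwards [hyF hA] with n hyA
  simpa only [← sub_eq_add_neg] using
    sub_two_mul_le_liminf_dist_sub_dist (eventually_of_mem hB (hAB (y n) hyA))

end GromovProduct

theorem stmt18_general {X : Type*} [MetricSpace X] (o : X) (F G : Filter X) [G.NeBot]
    (M : ℝ)
    (hvis : ∃ A ∈ F, ∃ B ∈ G, ∀ z ∈ A, ∀ w ∈ B,
      (dist o z + dist o w - dist z w) / 2 ≤ M)
    (y : ℕ → X) (hyF : Tendsto y atTop F)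
    (hyd : Tendsto (fun n => dist o (y n)) atTop atTop) :
    ∀ R : ℝ, 0 < R → ∀ᶠ n in atTop,
      ¬ (Filter.liminf (fun w => dist (y n) w - dist o w) G < (1/2) * Real.log R) := by
  intro R _
  exact ((tendsto_liminf_dist_sub_dist_atTop hvis hyF hyd).eventually_ge_atTop _).mono
    fun _ h => not_lt.2 h

/-- Visibility via bounded Gromov products excludes other boundary points
from closures of big horospheres (abstract version): if there are `A ∈ F`, `B ∈ G` with
`⟨z|w⟩_o ≤ M` for all `z ∈ A`, `w ∈ B`, and `(y_n)` tends to the boundary point of `F`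
(`y → F`) with `d(o,y_n) → ∞`, then for every `R > 0`, eventually
`y_n ∉ H^b_G(R) = {z : liminf_G (d(z,w) - d(o,w)) < (1/2) log R}`. -/
theorem stmt18 {X : Type*} [MetricSpace X] (o : X) (F G : Filter X) [F.NeBot] [G.NeBot]
    (M : ℝ)
    (hvis : ∃ A ∈ F, ∃ B ∈ G, ∀ z ∈ A, ∀ w ∈ B,
      (dist o z + dist o w - dist z w) / 2 ≤ M)
    (y : ℕ → X) (hyF : Tendsto y atTop F)
    (hyd : Tendsto (fun n => dist o (y n)) atTop atTop) :
    ∀ R : ℝ, 0 < R → ∀ᶠ n in atTop,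
      ¬ (Filter.liminf (fun w => dist (y n) w - dist o w) G < (1/2) * Real.log R) :=
  stmt18_general o F G M hvis y hyF hyd
end
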